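/- Let K be a field of characteristic zero and let A_{ij} (1 ≤ i ≤ j ≤ 3) be defined from Clebsch invariants A, B, C, D by A₁₁ = 2C + AB/3, A₂₂ = A₁₃ = D, A₃₃ = BD/2 + 2C(B²+AC)/9, A₂₃ = B(B²+AC)/3 + C(2C + AB/3)/3, A₁₂ = 2(B²+AC)/3. Then 2·R² := det([A_{ij}]) is, after substituting A, B, C, D by their expressions in I₂, I₄, I₆, I₁₀, equal to a polynomial with rational coefficients in I₂, I₄, I₆, I₁₀ that is isobaric of weight 30 (where I₂, I₄, I₆, I₁₀ have weights 2, 4, 6, 10). -/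
import Mathlib


open Matrix

variable {K : Type*} [Field K] [CharZero K]

/-- `2R² = det M` for the Clebsch conic matrix, with the Clebsch invariants substituted by
their expressions in the Igusa invariants `I₂, I₄, I₆, I₁₀`. -/
noncomputable def twoRsqIgusa (I2 I4 I6 I10 : K) : K :=
  let A : K := -I2 / 120
  let B : K := (I2 ^ 2 + 20 * I4) / 13500
  let C : K := -(I2 ^ 3 + 60 * I2 * I4 - 600 * I6) / (2 ^ 5 * 3 ^ 5 * 5 ^ 6)
  let D : K := -(9 * I2 ^ 5 + 700 * I2 ^ 3 * I4 - 3600 * I2 ^ 2 * I6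
      - 12400 * I2 * I4 ^ 2 + 48000 * I4 * I6 + 10800000 * I10) / (2 ^ 8 * 3 ^ 9 * 5 ^ 10)
  (!![2 * C + A * B / 3, 2 * (B ^ 2 + A * C) / 3, D;
      2 * (B ^ 2 + A * C) / 3, D,
        B * (B ^ 2 + A * C) / 3 + C * (2 * C + A * B / 3) / 3;
      D, B * (B ^ 2 + A * C) / 3 + C * (2 * C + A * B / 3) / 3,
        B * D / 2 + 2 * C * (B ^ 2 + A * C) / 9] :
    Matrix (Fin 3) (Fin 3) K).det

private noncomputable def clA : MvPolynomial (Fin 4) ℚ :=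
  MvPolynomial.C (-(1/120)) * MvPolynomial.X 0
private noncomputable def clB : MvPolynomial (Fin 4) ℚ :=
  MvPolynomial.C (1/13500) * (MvPolynomial.X 0 ^ 2 + MvPolynomial.C 20 * MvPolynomial.X 1)
private noncomputable def clC : MvPolynomial (Fin 4) ℚ :=
  MvPolynomial.C (-(1/(2^5*3^5*5^6))) *
    (MvPolynomial.X 0 ^ 3 + MvPolynomial.C 60 * MvPolynomial.X 0 * MvPolynomial.X 1
      - MvPolynomial.C 600 * MvPolynomial.X 2)
private noncomputable def clD : MvPolynomial (Fin 4) ℚ :=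
  MvPolynomial.C (-(1/(2^8*3^9*5^10))) *
    (MvPolynomial.C 9 * MvPolynomial.X 0 ^ 5
      + MvPolynomial.C 700 * MvPolynomial.X 0 ^ 3 * MvPolynomial.X 1
      - MvPolynomial.C 3600 * MvPolynomial.X 0 ^ 2 * MvPolynomial.X 2
      - MvPolynomial.C 12400 * MvPolynomial.X 0 * MvPolynomial.X 1 ^ 2
      + MvPolynomial.C 48000 * MvPolynomial.X 1 * MvPolynomial.X 2
      + MvPolynomial.C 10800000 * MvPolynomial.X 3)

private noncomputable def PR : MvPolynomial (Fin 4) ℚ :=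
  let a11 := MvPolynomial.C 2 * clC + MvPolynomial.C (1/3) * clA * clB
  let a12 := MvPolynomial.C (2/3) * (clB ^ 2 + clA * clC)
  let a13 := clD
  let a22 := clD
  let a23 := MvPolynomial.C (1/3) * clB * (clB ^ 2 + clA * clC)
    + MvPolynomial.C (1/3) * clC * (MvPolynomial.C 2 * clC + MvPolynomial.C (1/3) * clA * clB)
  let a33 := MvPolynomial.C (1/2) * clB * clD
    + MvPolynomial.C (2/9) * clC * (clB ^ 2 + clA * clC)
  a11 * (a22 * a33 - a23 * a23) - a12 * (a12 * a33 - a23 * a13)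
    + a13 * (a12 * a23 - a22 * a13)

set_option maxHeartbeats 2000000 in
/-- `2R²` is a polynomial in `I₂, I₄, I₆, I₁₀` with rational coefficients which is
isobaric of weight `30` for the weights `2, 4, 6, 10`. -/
theorem twoRsq_polynomial_isobaric_weight_30 :
    (∃ P : MvPolynomial (Fin 4) ℚ, ∀ I2 I4 I6 I10 : K,
      MvPolynomial.aeval ![I2, I4, I6, I10] P = twoRsqIgusa I2 I4 I6 I10) ∧
    (∀ I2 I4 I6 I10 l : K,
      twoRsqIgusa (l ^ 2 * I2) (l ^ 4 * I4) (l ^ 6 * I6) (l ^ 10 * I10) =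
        l ^ 30 * twoRsqIgusa I2 I4 I6 I10) := by
  constructor
  · refine ⟨PR, fun I2 I4 I6 I10 => ?_⟩
    simp only [PR, clA, clB, clC, clD, _root_.map_add, _root_.map_mul, _root_.map_sub, _root_.map_pow,
      MvPolynomial.aeval_C, MvPolynomial.aeval_X, twoRsqIgusa, Matrix.det_fin_three,
      Matrix.cons_val', Matrix.cons_val_zero, Matrix.cons_val_one, Matrix.head_cons,
      Matrix.empty_val', Matrix.cons_val_fin_one, Matrix.head_fin_const, Matrix.of_apply,
      Matrix.cons_val_two, Matrix.cons_val_three, Matrix.tail_cons]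
    have h : ∀ q : ℚ, algebraMap ℚ K q = (q : K) := fun q => eq_ratCast (algebraMap ℚ K) q
    simp only [h]
    push_cast
    ring
  · intro I2 I4 I6 I10 l
    simp only [twoRsqIgusa, Matrix.det_fin_three, Matrix.cons_val', Matrix.cons_val_zero,
      Matrix.cons_val_one, Matrix.head_cons, Matrix.empty_val', Matrix.cons_val_fin_one,
      Matrix.head_fin_const, Matrix.of_apply, Matrix.cons_val_two, Matrix.tail_cons]
    ring
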